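/- Let P(λ) = λ^3 + Aλ^2 + Bλ + D be a real cubic, and P_α(λ) = P(λ) + αλ. If α* = max{-P(1), P(-1), P(-D)/D} (with D ≠ 0), then for every α ≥ α* the polynomial P_α has a complex root of modulus ≥ 1. -/

import Mathlib

/-!
Factor `P_α(λ) = (λ - r)(λ² + bλ + c)` through a real root `r`, which we may assume has
`|r| < 1`. In terms of `r, b, c` the condition `P(-D)/D ≤ α` reads `(1 - c)(1 + br + cr²) ≤ 0`
(a Schur–Cohn determinant). If `c ≥ 1`, the roots of the quadratic have product `c`, so one has
modulus `≥ 1`. Otherwise `1 + br + cr² = (1 - ru)(1 - rv) ≤ 0` for the roots `u, v` of the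
quadratic, which are then real, and `ru ≥ 1` or `rv ≥ 1`.
-/

lemma cubic_pos_of_le {a b c x : ℝ} (hx : 1 + |a| + |b| + |c| ≤ x) :
    0 < x ^ 3 + a * x ^ 2 + b * x + c := by
  have hx1 : 1 ≤ x := by linarith [abs_nonneg a, abs_nonneg b, abs_nonneg c]
  have hxx : x ≤ x ^ 2 := by nlinarith
  nlinarith [neg_abs_le a, neg_abs_le b, neg_abs_le c, abs_nonneg b, abs_nonneg c,
    mul_le_mul_of_nonneg_left hx (by positivity : (0 : ℝ) ≤ x ^ 2)]

lemma exists_cubic_eq_zero (a b c : ℝ) : ∃ r : ℝ, r ^ 3 + a * r ^ 2 + b * r + c = 0 := by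
  set M := 1 + |a| + |b| + |c|
  have hM : 0 ≤ M := by positivity
  have hneg : (-M) ^ 3 + a * (-M) ^ 2 + b * (-M) + c < 0 := by
    have := cubic_pos_of_le (a := -a) (b := b) (c := -c) (x := M)
      (by simp only [abs_neg, M, le_refl])
    linarith
  obtain ⟨r, -, hr⟩ := intermediate_value_Icc (by linarith : -M ≤ M)
    (f := fun x : ℝ => x ^ 3 + a * x ^ 2 + b * x + c) (by fun_prop)
    ⟨hneg.le, (cubic_pos_of_le le_rfl).le⟩
  exact ⟨r, hr⟩

lemma quadratic_eq_mul_of_discrim_eq_sq {K : Type*} [Field K] [NeZero (2 : K)] {b c s : K}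
    (hs : b ^ 2 - 4 * c = s ^ 2) (z : K) :
    z ^ 2 + b * z + c = (z - (-b + s) / 2) * (z - (-b - s) / 2) := by
  field_simp
  linear_combination -hs

lemma exists_quadratic_root_one_le_norm_of_one_le_norm (b c : ℂ) (hc : 1 ≤ ‖c‖) :
    ∃ z : ℂ, z ^ 2 + b * z + c = 0 ∧ 1 ≤ ‖z‖ := by
  obtain ⟨s, hs⟩ := IsAlgClosed.exists_pow_nat_eq (b ^ 2 - 4 * c) two_pos
  have hfac := quadratic_eq_mul_of_discrim_eq_sq hs.symm
  have hprod : c = (-b + s) / 2 * ((-b - s) / 2) := by simpa using hfac 0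
  by_contra! h
  have hu := h ((-b + s) / 2) (by simp [hfac])
  have hv := h ((-b - s) / 2) (by simp [hfac])
  have : ‖c‖ < 1 := by
    rw [hprod, norm_mul]
    exact mul_lt_one_of_nonneg_of_lt_one_left (norm_nonneg _) hu hv.le
  linarith

lemma exists_quadratic_root_one_le_abs {b c r : ℝ} (hr : |r| ≤ 1)
    (hf : 1 + b * r + c * r ^ 2 ≤ 0) : ∃ x : ℝ, x ^ 2 + b * x + c = 0 ∧ 1 ≤ |x| := by
  have hdisc : 0 ≤ b ^ 2 - 4 * c := by
    have hr0 : r ≠ 0 := by rintro rfl; norm_num at hf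
    have : 0 ≤ r ^ 2 * (b ^ 2 - 4 * c) := by linear_combination sq_nonneg (b * r + 2) + 4 * hf
    exact (mul_nonneg_iff_of_pos_left (by positivity)).mp this
  set s := √(b ^ 2 - 4 * c)
  have hs : b ^ 2 - 4 * c = s ^ 2 := (Real.sq_sqrt hdisc).symm
  have hfac := quadratic_eq_mul_of_discrim_eq_sq hs
  have hroot : ∀ x, 1 ≤ r * x → 1 ≤ |x| := fun x hx =>
    calc 1 ≤ |r * x| := hx.trans (le_abs_self _)
      _ = |r| * |x| := abs_mul r x
      _ ≤ |x| := mul_le_of_le_one_left (abs_nonneg x) hr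
  have hrev : (1 - r * ((-b + s) / 2)) * (1 - r * ((-b - s) / 2)) ≤ 0 := by
    linear_combination hf + r ^ 2 / 4 * hs
  rcases mul_nonpos_iff.mp hrev with ⟨-, hv⟩ | ⟨hu, -⟩
  · exact ⟨(-b - s) / 2, by simp [hfac], hroot _ (by linarith)⟩
  · exact ⟨(-b + s) / 2, by simp [hfac], hroot _ (by linarith)⟩

lemma exists_quadratic_root_one_le_norm {b c r : ℝ} (hr : |r| ≤ 1)
    (h : (1 - c) * (1 + b * r + c * r ^ 2) ≤ 0) :
    ∃ z : ℂ, z ^ 2 + b * z + c = 0 ∧ 1 ≤ ‖z‖ := by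
  rcases mul_nonpos_iff.mp h with ⟨-, hf⟩ | ⟨hc, -⟩
  · obtain ⟨x, hx, hx1⟩ := exists_quadratic_root_one_le_abs hr hf
    exact ⟨x, by exact_mod_cast hx, by rwa [Complex.norm_real, Real.norm_eq_abs]⟩
  · refine exists_quadratic_root_one_le_norm_of_one_le_norm b c ?_
    rw [Complex.norm_real, Real.norm_eq_abs]
    exact (by linarith : (1 : ℝ) ≤ c).trans (le_abs_self c)

theorem unstable_above_max_general (A B D : ℝ) (α : ℝ)
    (hα : max (max (-(1 + A + B + D)) (-1 + A - B + D)) (-D ^ 2 + A * D - B + 1) ≤ α) :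
    ∃ z : ℂ, z ^ 3 + (A : ℂ) * z ^ 2 + ((B : ℂ) + (α : ℂ)) * z + (D : ℂ) = 0 ∧
      1 ≤ ‖z‖ := by
  obtain ⟨r, hr⟩ := exists_cubic_eq_zero A (B + α) D
  have hrC : (r : ℂ) ^ 3 + A * r ^ 2 + (B + α) * r + D = 0 := by exact_mod_cast hr
  by_cases hr1 : 1 ≤ |r|
  · exact ⟨r, hrC, by rwa [Complex.norm_real, Real.norm_eq_abs]⟩
  set c := r ^ 2 + A * r + B + α
  have hschur : (1 - c) * (1 + (A + r) * r + c * r ^ 2) ≤ 0 := by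
    have hα' := (le_max_right _ _).trans hα
    linear_combination hα' + (D - A - r * c) * hr
  obtain ⟨z, hz, hz1⟩ := exists_quadratic_root_one_le_norm (not_le.mp hr1).le hschur
  refine ⟨z, ?_, hz1⟩
  push_cast [c] at hz
  linear_combination (z - r) * hz + hrC

/-- For every `α ≥ α* = max{-P(1), P(-1), P(-D)/D}` (with `D ≠ 0`), the cubic
`P_α(λ) = λ³ + Aλ² + (B+α)λ + D` has a complex root of modulus `≥ 1`. -/
theorem unstable_above_max (A B D : ℝ) (hD : D ≠ 0) (α : ℝ)
    (hα : max (max (-(1 + A + B + D)) (-1 + A - B + D)) (-D ^ 2 + A * D - B + 1) ≤ α) :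
    ∃ z : ℂ, z ^ 3 + (A : ℂ) * z ^ 2 + ((B : ℂ) + (α : ℂ)) * z + (D : ℂ) = 0 ∧
      1 ≤ ‖z‖ :=
  unstable_above_max_general A B D α hα
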